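/- Let g ≥ 2 and b > 1 be integers with gcd(b,g) = 1, let a be a positive integer with gcd(a,b) = 1 and a < b^k, let j ≥ 1, t ≥ 1 and k ≥ c_g(b). For m ≥ 1 define X_m = { ⌊a·g^i/b^m⌋ mod g^j : i ≥ j }, the set of list numbers of j-words occurring in the expansion of a/b^m. Then X_{k+t} = { ((s − n)·(b^t)^{−1}) mod g^j : s ∈ X_k, n ∈ {0,…,b^t−1} }, where (b^t)^{−1} denotes the multiplicative inverse of b^t modulo g^j (which exists since gcd(b,g)=1). -/

import Mathlib

noncomputable def ordg (g m : ℕ) : ℕ := sInf {n : ℕ | 0 < n ∧ g ^ n ≡ 1 [MOD m]}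

noncomputable def cg (g b : ℕ) : ℕ :=
  sInf {c : ℕ | 0 < c ∧ ∀ t : ℕ, 0 < t → ordg g (b ^ (c + t)) = b ^ t * ordg g (b ^ c)}

/-!
Write `y = a g^i` with `i ≥ j`. Since `g^j ∣ y`, in `ZMod (g^j)` the list number `⌊y/q⌋`
satisfies `⌊y/q⌋ · q = -(y mod q)`, so it depends only on `y mod q`; and
`⌊y/b^k⌋ = b^t ⌊y/b^{k+t}⌋ + n` with `n = ⌊y/b^k⌋ mod b^t < b^t`, which gives `⊆`.
For `⊇`, multiplying `y` by powers of `g^O`, `O = ord_g(b^k)`, does not change `y mod b^k`.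
As `ord_g(b^{k+t}) = b^t O` for `k ≥ c_g(b)`, the `b^t` numbers `y g^{mO} mod b^{k+t}`,
`m < b^t`, are distinct, so their digits `n` run through all of `0, …, b^t - 1`.

That `c_g(b)` exists comes from lifting the exponent: with `N = ord_g(b^2)` and
`x = g^N - 1`, `b^m ∣ g^{Nw} - 1 ↔ b^m ∣ x w`, so `ord_g(b^m) = N · b^m / gcd(b^m, x)` for
`m ≥ 2`, and `gcd(b^m, x)` no longer changes once `m ≥ x`.
-/

theorem Nat.emultiplicity_pow_sub_one {p A : ℕ} (hp : p.Prime) (hpA : p ∣ A - 1)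
    (h4 : p = 2 → 4 ∣ A - 1) (n : ℕ) :
    emultiplicity p (A ^ n - 1) = emultiplicity p (A - 1) + emultiplicity p n := by
  rcases Nat.eq_zero_or_pos A with rfl | hA
  · rcases n with _ | n <;> simp
  have hpA' : ¬p ∣ A := fun h ↦ hp.one_lt.ne' <| Nat.dvd_one.mp <| by
    simpa [Nat.sub_sub_self hA] using Nat.dvd_sub h hpA
  rcases hp.eq_two_or_odd' with rfl | hodd
  · have hA1 : ((A - 1 : ℕ) : ℤ) = A - 1 := by push_cast [Nat.cast_sub hA]; ring
    have hAn1 : ((A ^ n - 1 : ℕ) : ℤ) = A ^ n - 1 := by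
      push_cast [Nat.cast_sub (Nat.one_le_pow n A hA)]; ring
    have := Int.two_pow_sub_pow' (x := A) (y := 1) n (by rw [← hA1]; exact_mod_cast h4 rfl)
      (by exact_mod_cast hpA')
    rw [one_pow, ← hA1, ← hAn1] at this
    rw [← Int.natCast_emultiplicity, ← Int.natCast_emultiplicity, ← Int.natCast_emultiplicity]
    exact_mod_cast this
  · simpa using Nat.emultiplicity_pow_sub_pow hp hodd (y := 1) (by simpa using hpA) hpA' n

theorem Nat.dvd_iff_dvd_of_emultiplicity_eq {n y z : ℕ}
    (h : ∀ p, p.Prime → p ∣ n → emultiplicity p y = emultiplicity p z) :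
    n ∣ y ↔ n ∣ z := by
  rw [Nat.dvd_iff_prime_pow_dvd_dvd y, Nat.dvd_iff_prime_pow_dvd_dvd z]
  refine forall₃_congr fun p k hp ↦ imp_congr_right fun hk ↦ ?_
  rcases k with _ | k
  · simp
  · rw [pow_dvd_iff_le_emultiplicity, pow_dvd_iff_le_emultiplicity,
      h p hp ((dvd_pow_self p k.succ_ne_zero).trans hk)]

theorem Nat.pow_dvd_pow_sub_one_iff {b A : ℕ} (hA : b ^ 2 ∣ A - 1) (m w : ℕ) :
    b ^ m ∣ A ^ w - 1 ↔ b ^ m ∣ (A - 1) * w := by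
  refine Nat.dvd_iff_dvd_of_emultiplicity_eq fun p hp hpb ↦ ?_
  have hpb : p ∣ b := hp.dvd_of_dvd_pow hpb
  rw [Nat.emultiplicity_pow_sub_one hp ((hpb.trans (dvd_pow_self b two_ne_zero)).trans hA)
    (by rintro rfl; exact (pow_dvd_pow_of_dvd hpb 2).trans hA), emultiplicity_mul hp.prime]

theorem Nat.dvd_mul_iff_div_gcd_dvd {n x w : ℕ} (hn : 0 < n) :
    n ∣ x * w ↔ n / n.gcd x ∣ w := by
  have hd : 0 < n.gcd x := Nat.gcd_pos_of_pos_left x hn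
  have hcop := Nat.coprime_div_gcd_div_gcd (m := n) (n := x) hd
  have hsplit : n ∣ x * w ↔ n.gcd x * (n / n.gcd x) ∣ n.gcd x * (x / n.gcd x * w) := by
    rw [Nat.mul_div_cancel' (Nat.gcd_dvd_left n x), ← mul_assoc,
      Nat.mul_div_cancel' (Nat.gcd_dvd_right n x)]
  rw [hsplit, Nat.mul_dvd_mul_iff_left hd, hcop.dvd_mul_left]

theorem Nat.gcd_pow_left_eq_of_le {b x m : ℕ} (hb : b ≠ 0) (hx : x ≠ 0) (hm : x ≤ m) :
    (b ^ m).gcd x = (b ^ x).gcd x := by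
  refine Nat.eq_of_factorization_eq (Nat.gcd_ne_zero_right hx) (Nat.gcd_ne_zero_right hx)
    fun p ↦ ?_
  rw [Nat.factorization_gcd (pow_ne_zero _ hb) hx, Nat.factorization_gcd (pow_ne_zero _ hb) hx]
  simp only [Nat.factorization_pow, Finsupp.inf_apply, Finsupp.smul_apply, smul_eq_mul]
  have := Nat.factorization_lt p hx
  rcases Nat.eq_zero_or_pos (b.factorization p) with h | h
  · simp [h]
  · rw [min_eq_right (by nlinarith), min_eq_right (by nlinarith)]

theorem Nat.modEq_one_iff_dvd_sub_one {A n : ℕ} (hA : 0 < A) : A ≡ 1 [MOD n] ↔ n ∣ A - 1 :=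
  Nat.ModEq.comm.trans (Nat.modEq_iff_dvd' hA)

theorem Nat.modEq_mul_of_modEq_of_div_mod_eq {q r y₁ y₂ : ℕ} (h : y₁ ≡ y₂ [MOD q])
    (hd : y₁ / q % r = y₂ / q % r) : y₁ ≡ y₂ [MOD q * r] := by
  unfold Nat.ModEq at *
  rw [Nat.mod_mul, Nat.mod_mul, h, hd]

theorem ZMod.natCast_div_mul_eq_neg_mod {M y q : ℕ} (hy : (y : ZMod M) = 0) :
    ((y / q : ℕ) : ZMod M) * q = -((y % q : ℕ) : ZMod M) := by
  have := congrArg (Nat.cast : ℕ → ZMod M) (Nat.div_add_mod y q)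
  push_cast at this
  linear_combination this + hy

theorem ZMod.natCast_div_eq_of_modEq {M q y₁ y₂ : ℕ} (hq : q.Coprime M)
    (hy₁ : (y₁ : ZMod M) = 0) (hy₂ : (y₂ : ZMod M) = 0) (h : y₁ ≡ y₂ [MOD q]) :
    ((y₁ / q : ℕ) : ZMod M) = ((y₂ / q : ℕ) : ZMod M) := by
  refine (ZMod.unitOfCoprime q hq).isUnit.mul_right_cancel ?_
  rw [ZMod.coe_unitOfCoprime, natCast_div_mul_eq_neg_mod hy₁, natCast_div_mul_eq_neg_mod hy₂, h]

theorem ZMod.eq_sub_mul_natCast_inv_iff {M u : ℕ} (hu : u.Coprime M) {x s y : ZMod M} :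
    x = (s - y) * (u : ZMod M)⁻¹ ↔ (u : ZMod M) * x + y = s := by
  rw [← ZMod.coe_unitOfCoprime u hu, ZMod.inv_coe_unit, Units.eq_mul_inv_iff_mul_eq,
    eq_sub_iff_add_eq, mul_comm]

section Order

variable {g M : ℕ}

theorem ZMod.isOfFinOrder_natCast (hM : M ≠ 0) (h : g.Coprime M) :
    IsOfFinOrder (g : ZMod M) :=
  haveI : NeZero M := ⟨hM⟩
  ((ZMod.isUnit_iff_coprime g M).mpr h).isOfFinOrder

theorem ordg_eq_orderOf (hM : M ≠ 0) (h : g.Coprime M) : ordg g M = orderOf (g : ZMod M) := by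
  have hpow : ∀ n, (g : ZMod M) ^ n = 1 ↔ g ^ n ≡ 1 [MOD M] := fun n ↦ by
    rw [← ZMod.natCast_eq_natCast_iff, Nat.cast_pow, Nat.cast_one]
  have hmem : orderOf (g : ZMod M) ∈ {n | 0 < n ∧ g ^ n ≡ 1 [MOD M]} :=
    ⟨(ZMod.isOfFinOrder_natCast hM h).orderOf_pos, (hpow _).mp (pow_orderOf_eq_one _)⟩
  refine le_antisymm (Nat.sInf_le hmem) ?_
  obtain ⟨hpos, hord⟩ := Nat.sInf_mem ⟨_, hmem⟩
  exact orderOf_le_of_pow_eq_one hpos ((hpow _).mpr hord)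

theorem ordg_pos (hM : M ≠ 0) (h : g.Coprime M) : 0 < ordg g M := by
  rw [ordg_eq_orderOf hM h]
  exact (ZMod.isOfFinOrder_natCast hM h).orderOf_pos

theorem pow_modEq_pow_iff_modEq_ordg (hM : M ≠ 0) (h : g.Coprime M) {n₁ n₂ : ℕ} :
    g ^ n₁ ≡ g ^ n₂ [MOD M] ↔ n₁ ≡ n₂ [MOD ordg g M] := by
  rw [ordg_eq_orderOf hM h, ← (ZMod.isOfFinOrder_natCast hM h).pow_eq_pow_iff_modEq,
    ← ZMod.natCast_eq_natCast_iff, Nat.cast_pow, Nat.cast_pow]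

theorem ordg_dvd_iff (hM : M ≠ 0) (h : g.Coprime M) {n : ℕ} :
    ordg g M ∣ n ↔ g ^ n ≡ 1 [MOD M] := by
  rw [← pow_zero g, pow_modEq_pow_iff_modEq_ordg hM h, Nat.modEq_zero_iff_dvd]

end Order

theorem ordg_pow_eq_mul_div_gcd {g b m : ℕ} (hg : 0 < g) (hb : b ≠ 0) (hgb : g.Coprime b)
    (hm : 2 ≤ m) :
    ordg g (b ^ m) = ordg g (b ^ 2) * (b ^ m / (b ^ m).gcd (g ^ ordg g (b ^ 2) - 1)) := by
  set N := ordg g (b ^ 2)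
  have hbM : ∀ m, b ^ m ≠ 0 := fun m ↦ pow_ne_zero m hb
  have hA : b ^ 2 ∣ g ^ N - 1 := (Nat.modEq_one_iff_dvd_sub_one (by positivity)).mp
    ((ordg_dvd_iff (hbM 2) (hgb.pow_right 2)).mp dvd_rfl)
  have hdvd : ∀ w, g ^ (N * w) ≡ 1 [MOD b ^ m] ↔ b ^ m / (b ^ m).gcd (g ^ N - 1) ∣ w :=
    fun w ↦ by
      rw [Nat.modEq_one_iff_dvd_sub_one (by positivity), pow_mul, Nat.pow_dvd_pow_sub_one_iff hA,
        Nat.dvd_mul_iff_div_gcd_dvd (Nat.pos_of_ne_zero (hbM m))]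
  refine Nat.dvd_right_iff_eq.mp fun n ↦ ?_
  rw [ordg_dvd_iff (hbM m) (hgb.pow_right m)]
  constructor
  · intro h
    obtain ⟨w, rfl⟩ : N ∣ n :=
      (ordg_dvd_iff (hbM 2) (hgb.pow_right 2)).mpr (h.of_dvd (pow_dvd_pow b hm))
    exact mul_dvd_mul_left N ((hdvd w).mp h)
  · rintro ⟨w, rfl⟩
    rw [mul_assoc, hdvd]
    exact dvd_mul_right _ _

theorem ordg_pow_cg_add {g b : ℕ} (hg : 1 < g) (hb : b ≠ 0) (hgb : g.Coprime b) {t : ℕ}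
    (ht : 0 < t) :
    ordg g (b ^ (cg g b + t)) = b ^ t * ordg g (b ^ cg g b) := by
  set N := ordg g (b ^ 2)
  set x := g ^ N - 1
  have hx : x ≠ 0 :=
    Nat.sub_ne_zero_of_lt (Nat.one_lt_pow (ordg_pos (pow_ne_zero 2 hb) (hgb.pow_right 2)).ne' hg)
  have hformula : ∀ m, x ≤ m → 2 ≤ m → ordg g (b ^ m) = N * (b ^ m / (b ^ x).gcd x) :=
    fun m hxm hm ↦ by
      rw [ordg_pow_eq_mul_div_gcd (by omega) hb hgb hm, Nat.gcd_pow_left_eq_of_le hb hx hxm]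
  have hne : {c : ℕ | 0 < c ∧ ∀ t : ℕ, 0 < t →
      ordg g (b ^ (c + t)) = b ^ t * ordg g (b ^ c)}.Nonempty := by
    refine ⟨x + 2, by omega, fun t _ ↦ ?_⟩
    have hD : (b ^ x).gcd x ∣ b ^ (x + 2) :=
      (Nat.gcd_dvd_left _ _).trans (pow_dvd_pow b (by omega))
    rw [hformula _ (by omega) (by omega), hformula _ (by omega) (by omega), add_comm _ t, pow_add,
      Nat.mul_div_assoc _ hD]
    ring
  exact (Nat.sInf_mem hne).2 t ht

theorem ordg_pow_add_of_cg_le {g b k : ℕ} (hg : 1 < g) (hb : b ≠ 0) (hgb : g.Coprime b)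
    (hk : cg g b ≤ k) (t : ℕ) : ordg g (b ^ (k + t)) = b ^ t * ordg g (b ^ k) := by
  have hc : ∀ s, ordg g (b ^ (cg g b + s)) = b ^ s * ordg g (b ^ cg g b) := fun s ↦ by
    rcases Nat.eq_zero_or_pos s with rfl | hs
    · simp
    · exact ordg_pow_cg_add hg hb hgb hs
  obtain ⟨s, rfl⟩ := Nat.exists_eq_add_of_le hk
  rw [add_assoc, hc, hc, pow_add]
  ring

theorem exists_pow_modEq_and_div_mod_eq {g a b k t : ℕ} (hb : b ≠ 0) (hgb : g.Coprime b)
    (hab : a.Coprime b) (hord : ordg g (b ^ (k + t)) = b ^ t * ordg g (b ^ k)) (i : ℕ) {n : ℕ}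
    (hn : n < b ^ t) :
    ∃ i', i ≤ i' ∧ a * g ^ i' ≡ a * g ^ i [MOD b ^ k] ∧
      a * g ^ i' / b ^ k % b ^ t = n := by
  set O := ordg g (b ^ k)
  have hcong : ∀ m, a * g ^ (i + m * O) ≡ a * g ^ i [MOD b ^ k] := fun m ↦
    Nat.ModEq.mul_left a <|
      (pow_modEq_pow_iff_modEq_ordg (pow_ne_zero k hb) (hgb.pow_right k)).mpr
        (Nat.add_mul_mod_self_right i m O)
  set f := fun m ↦ a * g ^ (i + m * O) / b ^ k % b ^ t
  have hinj : Set.InjOn f (Finset.range (b ^ t)) := by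
    intro m₁ hm₁ m₂ hm₂ hf
    have h₁ : a * g ^ (i + m₁ * O) ≡ a * g ^ (i + m₂ * O) [MOD b ^ (k + t)] := by
      rw [pow_add]
      exact Nat.modEq_mul_of_modEq_of_div_mod_eq ((hcong m₁).trans (hcong m₂).symm) hf
    have h₂ := Nat.ModEq.cancel_left_of_coprime (hab.symm.pow_left _) h₁
    rw [pow_modEq_pow_iff_modEq_ordg (pow_ne_zero _ hb) (hgb.pow_right _), hord] at h₂
    have h₃ : m₁ ≡ m₂ [MOD b ^ t] := Nat.ModEq.mul_right_cancel'
      (ordg_pos (pow_ne_zero k hb) (hgb.pow_right k)).ne' (h₂.add_left_cancel' i)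
    exact h₃.eq_of_lt_of_lt (Finset.mem_range.mp hm₁) (Finset.mem_range.mp hm₂)
  have himage : (Finset.range (b ^ t)).image f = Finset.range (b ^ t) :=
    Finset.eq_of_subset_of_card_le
      (Finset.image_subset_iff.mpr fun m _ ↦ Finset.mem_range.mpr (Nat.mod_lt _ (by positivity)))
      (by rw [Finset.card_image_of_injOn hinj])
  obtain ⟨m, -, hm⟩ := Finset.mem_image.mp (himage ▸ Finset.mem_range.mpr hn)
  exact ⟨i + m * O, Nat.le_add_right _ _, hcong m, hm⟩

theorem words_next_level_general (g b a j t k : ℕ) (hg : 2 ≤ g) (hb : 1 < b)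
    (hbg : Nat.gcd b g = 1) (hab : Nat.gcd a b = 1) (hk : cg g b ≤ k) :
    {x : ZMod (g ^ j) | ∃ i : ℕ, j ≤ i ∧ x = ((a * g ^ i / b ^ (k + t) : ℕ) : ZMod (g ^ j))}
      = {x : ZMod (g ^ j) |
          ∃ s : ZMod (g ^ j),
            (∃ i : ℕ, j ≤ i ∧ s = ((a * g ^ i / b ^ k : ℕ) : ZMod (g ^ j))) ∧
            ∃ n : ℕ, n < b ^ t ∧
              x = (s - (n : ZMod (g ^ j))) * ((b ^ t : ℕ) : ZMod (g ^ j))⁻¹} := by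
  have hb₀ : b ≠ 0 := by omega
  have hgb : g.Coprime b := Nat.coprime_comm.mp hbg
  have hbj : ∀ m, (b ^ m).Coprime (g ^ j) := fun m ↦ Nat.Coprime.pow _ _ hbg
  have hzero : ∀ i, j ≤ i → ((a * g ^ i : ℕ) : ZMod (g ^ j)) = 0 := fun i hi ↦
    (ZMod.natCast_eq_zero_iff _ _).mpr ((pow_dvd_pow g hi).mul_left a)
  have hsplit : ∀ y, y / b ^ k = b ^ t * (y / b ^ (k + t)) + y / b ^ k % b ^ t := fun y ↦ by
    rw [pow_add, ← Nat.div_div_eq_div_mul, Nat.div_add_mod]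
  ext x
  simp only [Set.mem_ofPred_eq, ZMod.eq_sub_mul_natCast_inv_iff (hbj t)]
  constructor
  · rintro ⟨i, hi, rfl⟩
    refine ⟨_, ⟨i, hi, rfl⟩, a * g ^ i / b ^ k % b ^ t, Nat.mod_lt _ (pow_pos (by omega) t),
      ?_⟩
    rw [← Nat.cast_mul, ← Nat.cast_add, ← hsplit]
  · rintro ⟨_, ⟨i, hi, rfl⟩, n, hn, hx⟩
    obtain ⟨i', hii', hmod, hdigit⟩ := exists_pow_modEq_and_div_mod_eq hb₀ hgb hab
      (ordg_pow_add_of_cg_le (by omega) hb₀ hgb hk t) i hn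
    refine ⟨i', hi.trans hii', ((ZMod.isUnit_iff_coprime _ _).mpr (hbj t)).mul_left_cancel ?_⟩
    rw [← add_left_inj (n : ZMod (g ^ j)), hx,
      ← ZMod.natCast_div_eq_of_modEq (hbj k) (hzero i' (hi.trans hii')) (hzero i hi) hmod,
      hsplit, hdigit, Nat.cast_add, Nat.cast_mul]

/-- For `j, t ≥ 1` and `k ≥ c_g(b)`, the set `X_{k+t}` of list numbers of
`j`-words occurring in the expansion of `a/b^{k+t}` (viewed in `ZMod (g^j)`) equals
`{ (s − n)·(b^t)⁻¹ mod g^j : s ∈ X_k, n ∈ {0,…,b^t−1} }`, where `(b^t)⁻¹` is the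
multiplicative inverse of `b^t` modulo `g^j`. -/
theorem words_next_level (g b a j t k : ℕ) (hg : 2 ≤ g) (hb : 1 < b)
    (hbg : Nat.gcd b g = 1) (ha : 0 < a) (hab : Nat.gcd a b = 1) (hak : a < b ^ k)
    (hj : 1 ≤ j) (ht : 1 ≤ t) (hk : cg g b ≤ k) :
    {x : ZMod (g ^ j) | ∃ i : ℕ, j ≤ i ∧ x = ((a * g ^ i / b ^ (k + t) : ℕ) : ZMod (g ^ j))}
      = {x : ZMod (g ^ j) |
          ∃ s : ZMod (g ^ j),
            (∃ i : ℕ, j ≤ i ∧ s = ((a * g ^ i / b ^ k : ℕ) : ZMod (g ^ j))) ∧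
            ∃ n : ℕ, n < b ^ t ∧
              x = (s - (n : ZMod (g ^ j))) * ((b ^ t : ℕ) : ZMod (g ^ j))⁻¹} :=
  words_next_level_general g b a j t k hg hb hbg hab hk
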